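/- arXiv:1210.3795 — 2 statements merged into one kernel-verified Lean document; each statement's English description precedes it below -/
import Mathlib

section
/- For every integer d ≥ 2 there exists α(d) > 0 such that for all α > α(d) and all vectors u, v ∈ ℝ^d with u_i > 0, v_i > 0 for all i and ∑_{i=1}^d u_i = ∑_{i=1}^d v_i = 1, the inequality 2 ∑_{i=1}^d u_i v_i ≥ (∑_{i=1}^d u_i^{−α})/(∑_{i=1}^d u_i^{−(1+α)}) + (∑_{i=1}^d v_i^{−α})/(∑_{i=1}^d v_i^{−(1+α)}) holds, and equality holds if and only if u_i = v_i = 1/d for all i. -/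
open Finset

/-!
With `β = 1 + α`, the quotient `∑ uᵢ^(-α) / ∑ uᵢ^(-β)` is the mean of `u` for the weights
`uᵢ^(-β)`, which concentrate on the smallest coordinate `m` of `u` as `β` grows; Bernoulli's
inequality `(x/m)^β ≥ 1 + β (x - m)/m` makes this quantitative.

If one vector, say `u`, is far from uniform (`1 - d m > 2d/β`), the two means are at most
`(m + n)(1 + d/β)` with `n = min v`, whereas `⟨u, v⟩ ≥ m + n (1 - d m)` and symmetrically,
which already gives the strict inequality.

Otherwise both vectors are close to uniform. In Chebyshev's double sum
`∑ᵢ ∑ⱼ (wᵢ - wⱼ)(uⱼ - uᵢ) = 2 ∑ w - 2d ∑ u w` for the weights `w`, the pairs involving the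
minimal coordinate alone contribute `2 d² ∑ (uᵢ - m)² w_min`, by Bernoulli again, so the mean of
`u` is at most `1/d - 2 ‖u - 1/d‖²`. Since `⟨u, v⟩ ≥ 1/d - (‖u - 1/d‖² + ‖v - 1/d‖²)/2`,
the gap in the inequality is at least `‖u - 1/d‖² + ‖v - 1/d‖²`, which vanishes only at the
uniform vector.
-/

theorem rpow_neg_mul_add_le {β m x : ℝ} (hβ : 1 ≤ β) (hm : 0 < m) (hx : 0 < x) :
    x ^ (-β) * (m + β * (x - m)) ≤ m * m ^ (-β) := by
  have bernoulli := one_add_mul_self_le_rpow_one_add (s := (x - m) / m)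
    (by rw [le_div_iff₀ hm]; linarith) hβ
  rw [show 1 + (x - m) / m = x / m by field_simp; ring, Real.div_rpow hx.le hm.le,
    le_div_iff₀ (by positivity)] at bernoulli
  rw [Real.rpow_neg hx.le, Real.rpow_neg hm.le, ← div_eq_inv_mul, div_le_iff₀ (by positivity)]
  calc m + β * (x - m) = m * ((1 + β * ((x - m) / m)) * m ^ β) * (m ^ β)⁻¹ := by
        field_simp
    _ ≤ m * x ^ β * (m ^ β)⁻¹ := by gcongr
    _ = _ := by ring

theorem sub_mul_rpow_neg_le {β m x : ℝ} (hβ : 1 ≤ β) (hm : 0 < m) (hx : 0 < x) :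
    (x - m) * x ^ (-β) ≤ m / β * m ^ (-β) := by
  have := rpow_neg_mul_add_le hβ hm hx
  have : 0 < x ^ (-β) := by positivity
  rw [div_mul_eq_mul_div, le_div_iff₀ (by linarith)]
  nlinarith

theorem mul_sub_mul_rpow_neg_le_sub {β c m x : ℝ} (hβ : 1 ≤ β) (hm : 0 < m) (hmx : m ≤ x)
    (hc : c * (m + β * (x - m)) ≤ β) :
    c * (x - m) * m ^ (-β) ≤ m ^ (-β) - x ^ (-β) := by
  have key := rpow_neg_mul_add_le hβ hm (hm.trans_le hmx)
  have hK : 0 < m + β * (x - m) := by nlinarith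
  have : 0 < m ^ (-β) := by positivity
  rw [← mul_le_mul_iff_of_pos_right hK]
  nlinarith [mul_le_mul_of_nonneg_right hc (mul_nonneg (sub_nonneg.2 hmx) this.le)]

theorem add_mul_lt_mul_one_sub_add_mul_one_sub {d m n δ : ℝ} (hd : 0 < d) (hm : 0 ≤ m)
    (hn : 0 < n) (hdn : d * n ≤ 1) (hδ₀ : 0 ≤ δ) (hδ₁ : δ ≤ 1) (hfar : 2 * δ < 1 - d * m) :
    (m + n) * δ < m * (1 - d * n) + n * (1 - d * m) := by
  have key : d * (m * (1 - d * n) + n * (1 - d * m) - (m + n) * δ) =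
      d * n * ((1 - d * m) * (1 + δ) - 2 * δ) + (1 - d * n) * (d * m) * (1 - δ) := by ring
  have : 0 < d * n * ((1 - d * m) * (1 + δ) - 2 * δ) := by
    have := mul_nonneg (hδ₀.trans (by linarith : δ ≤ 1 - d * m)) hδ₀
    exact mul_pos (mul_pos hd hn) (by nlinarith)
  have : 0 ≤ (1 - d * n) * (d * m) * (1 - δ) := by
    have := mul_nonneg hd.le hm
    exact mul_nonneg (mul_nonneg (by linarith) this) (by linarith)
  nlinarith

section

variable {ι : Type*} [Fintype ι]

theorem sum_sub_mul_sub_eq (f g : ι → ℝ) :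
    ∑ i, ∑ j, (f i - f j) * (g j - g i) =
      2 * ((∑ i, f i) * ∑ i, g i) - 2 * (Fintype.card ι * ∑ i, f i * g i) := by
  simp only [mul_sub, sub_mul, sum_sub_distrib, ← mul_sum, ← sum_mul, sum_const, card_univ,
    nsmul_eq_mul, mul_left_comm (f _)]
  ring

/-- Chebyshev's sum inequality, keeping the terms of its double sum in the row and column
of `i₀`. -/
theorem Antivary.card_mul_sum_le_sum_mul_sum_add {f g : ι → ℝ} (hfg : Antivary f g) (i₀ : ι) :
    Fintype.card ι * ∑ i, f i * g i ≤
      (∑ i, f i) * (∑ i, g i) + ∑ i, (f i - f i₀) * (g i - g i₀) := by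
  classical
  set T : ι → ι → ℝ := fun i j => (f i - f j) * (g j - g i)
  have hT : ∀ i j, 0 ≤ T i j := fun i j => by
    have := hfg.sub_mul_sub_nonpos i j
    simp only [T]; nlinarith
  have row_add_col : ∑ j, T i₀ j + ∑ i, T i i₀ ≤ ∑ i, ∑ j, T i j := by
    rw [← add_sum_erase _ (fun i => ∑ j, T i j) (mem_univ i₀),
      ← add_sum_erase _ (fun i => T i i₀) (mem_univ i₀)]
    have : T i₀ i₀ = 0 := by simp [T]
    rw [this, zero_add]
    gcongr with i
    exact single_le_sum (fun j _ => hT i j) (mem_univ i₀)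
  have hrow : ∑ j, T i₀ j = - ∑ i, (f i - f i₀) * (g i - g i₀) := by
    rw [← sum_neg_distrib]; exact sum_congr rfl fun i _ => by simp only [T]; ring
  have hcol : ∑ i, T i i₀ = - ∑ i, (f i - f i₀) * (g i - g i₀) := by
    rw [← sum_neg_distrib]; exact sum_congr rfl fun i _ => by simp only [T]; ring
  have := sum_sub_mul_sub_eq f g
  linarith

theorem nonempty_of_sum_eq_one {u : ι → ℝ} (hsum : ∑ i, u i = 1) : Nonempty ι :=
  let ⟨i, _⟩ := exists_ne_zero_of_sum_ne_zero (hsum ▸ one_ne_zero)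
  ⟨i⟩

theorem card_ne_zero_of_sum_eq_one {u : ι → ℝ} (hsum : ∑ i, u i = 1) :
    (Fintype.card ι : ℝ) ≠ 0 :=
  have := nonempty_of_sum_eq_one hsum
  Nat.cast_ne_zero.2 Fintype.card_ne_zero

theorem sum_sub_const (u : ι → ℝ) (c : ℝ) : ∑ i, (u i - c) = ∑ i, u i - Fintype.card ι * c := by
  simp [sum_sub_distrib]

theorem card_mul_le_one_of_forall_le {u : ι → ℝ} (hsum : ∑ i, u i = 1) {i₀ : ι}
    (hmin : ∀ i, u i₀ ≤ u i) : Fintype.card ι * u i₀ ≤ 1 := by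
  simpa [hsum] using sum_le_sum fun i (_ : i ∈ univ) => hmin i

theorem sub_le_one_sub_card_mul {u : ι → ℝ} (hsum : ∑ i, u i = 1) {i₀ : ι}
    (hmin : ∀ i, u i₀ ≤ u i) (i : ι) : u i - u i₀ ≤ 1 - Fintype.card ι * u i₀ := by
  rw [← hsum, ← sum_sub_const]
  exact single_le_sum (fun j _ => sub_nonneg.2 (hmin j)) (mem_univ i)

theorem sum_sq_sub_eq {u : ι → ℝ} (hsum : ∑ i, u i = 1) (t : ℝ) :
    ∑ i, (u i - t) ^ 2 =
      ∑ i, (u i - 1 / Fintype.card ι) ^ 2 + Fintype.card ι * (t - 1 / Fintype.card ι) ^ 2 := by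
  have := card_ne_zero_of_sum_eq_one hsum
  simp only [sub_sq, sum_add_distrib, sum_sub_distrib, ← sum_mul, ← mul_sum, sum_const, card_univ,
    nsmul_eq_mul, hsum]
  field_simp
  ring

theorem sum_sq_sub_pos_of_ne {u : ι → ℝ} {c : ℝ} (h : u ≠ fun _ => c) :
    0 < ∑ i, (u i - c) ^ 2 := by
  obtain ⟨i, hi⟩ := Function.ne_iff.1 h
  exact sum_pos' (fun j _ => sq_nonneg _) ⟨i, mem_univ i, sq_pos_of_ne_zero (sub_ne_zero.2 hi)⟩

theorem one_div_card_sub_le_sum_mul {u v : ι → ℝ} (hu : ∑ i, u i = 1) (hv : ∑ i, v i = 1) :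
    1 / Fintype.card ι -
        (∑ i, (u i - 1 / Fintype.card ι) ^ 2 + ∑ i, (v i - 1 / Fintype.card ι) ^ 2) / 2 ≤
      ∑ i, u i * v i := by
  have := card_ne_zero_of_sum_eq_one hu
  calc _ = ∑ i, u i * v i -
        (∑ i, (u i - 1 / Fintype.card ι + (v i - 1 / Fintype.card ι)) ^ 2) / 2 := by
        simp only [add_sq, sub_sq, mul_sub, sub_mul, sum_add_distrib, sum_sub_distrib, ← mul_sum,
          ← sum_mul, sum_const, card_univ, nsmul_eq_mul, mul_assoc, hu, hv]
        field_simp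
        ring
    _ ≤ _ := sub_le_self _ (by positivity)

theorem min_add_mul_le_sum_mul {u v : ι → ℝ} (hu : ∑ i, u i = 1) (hv : ∑ i, v i = 1) {i₀ j₀ : ι}
    (hu_min : ∀ i, u i₀ ≤ u i) (hv_min : ∀ i, v j₀ ≤ v i) :
    u i₀ + v j₀ * (1 - Fintype.card ι * u i₀) ≤ ∑ i, u i * v i := by
  calc u i₀ + v j₀ * (1 - Fintype.card ι * u i₀) = ∑ i, (u i₀ * v i + v j₀ * (u i - u i₀)) := by
        rw [sum_add_distrib, ← mul_sum, ← mul_sum, sum_sub_const, hu, hv, mul_one]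
    _ ≤ ∑ i, u i * v i := by
        gcongr with i
        nlinarith [mul_nonneg (sub_nonneg.2 (hu_min i)) (sub_nonneg.2 (hv_min i))]

noncomputable def tiltedMean (β : ℝ) (u : ι → ℝ) : ℝ :=
  (∑ i, u i * u i ^ (-β)) / ∑ i, u i ^ (-β)

theorem div_sum_rpow_neg_eq_tiltedMean {u : ι → ℝ} (hu : ∀ i, 0 < u i) (α : ℝ) :
    (∑ i, u i ^ (-α)) / (∑ i, u i ^ (-(1 + α))) = tiltedMean (1 + α) u := by
  congr 1
  refine sum_congr rfl fun i _ => ?_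
  rw [show -α = 1 + -(1 + α) by ring, Real.rpow_add (hu i), Real.rpow_one]

theorem tiltedMean_const [Nonempty ι] (β : ℝ) {c : ℝ} (hc : 0 < c) :
    tiltedMean β (fun _ : ι => c) = c := by
  have : 0 < c ^ (-β) := by positivity
  simp only [tiltedMean, sum_const, card_univ, nsmul_eq_mul]
  field_simp

theorem tiltedMean_le_mul {β : ℝ} (hβ : 1 ≤ β) {u : ι → ℝ} (hu : ∀ i, 0 < u i) (i₀ : ι) :
    tiltedMean β u ≤ u i₀ * (1 + Fintype.card ι / β) := by
  have hW : 0 < ∑ i, u i ^ (-β) :=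
    sum_pos (fun i _ => Real.rpow_pos_of_pos (hu i) _) ⟨i₀, mem_univ _⟩
  rw [tiltedMean, div_le_iff₀ hW]
  calc ∑ i, u i * u i ^ (-β) = u i₀ * ∑ i, u i ^ (-β) + ∑ i, (u i - u i₀) * u i ^ (-β) := by
        rw [mul_sum, ← sum_add_distrib]; exact sum_congr rfl fun i _ => by ring
    _ ≤ u i₀ * ∑ i, u i ^ (-β) + ∑ _i : ι, u i₀ / β * u i₀ ^ (-β) := by
        grw [sum_le_sum fun i _ => sub_mul_rpow_neg_le hβ (hu i₀) (hu i)]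
    _ = u i₀ * ∑ i, u i ^ (-β) + Fintype.card ι * (u i₀ / β) * u i₀ ^ (-β) := by
        simp [mul_assoc]
    _ ≤ u i₀ * ∑ i, u i ^ (-β) + Fintype.card ι * (u i₀ / β) * ∑ i, u i ^ (-β) := by
        have := hu i₀
        gcongr
        exact single_le_sum (fun i _ => (Real.rpow_pos_of_pos (hu i) _).le) (mem_univ i₀)
    _ = u i₀ * (1 + Fintype.card ι / β) * ∑ i, u i ^ (-β) := by ring

theorem tiltedMean_le_of_near {β : ℝ} {u : ι → ℝ} (hu : ∀ i, 0 < u i) (hsum : ∑ i, u i = 1)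
    {i₀ : ι} (hmin : ∀ i, u i₀ ≤ u i)
    (hβ : 4 * (Fintype.card ι : ℝ) ^ 3 + 2 * Fintype.card ι ≤ β)
    (hnear : 1 - Fintype.card ι * u i₀ ≤ 2 * Fintype.card ι / β) :
    tiltedMean β u ≤ 1 / Fintype.card ι - 2 * ∑ i, (u i - 1 / Fintype.card ι) ^ 2 := by
  set d : ℝ := (Fintype.card ι : ℝ)
  set m := u i₀
  set w : ι → ℝ := fun i => u i ^ (-β)
  have hd : 1 ≤ d := Nat.one_le_cast.2 (Fintype.card_pos_iff.2 ⟨i₀⟩)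
  have hβ1 : 1 ≤ β := by linarith [one_le_pow₀ (n := 3) hd]
  have hβ0 : 0 < β := by linarith
  have hdm : d * m ≤ 1 := card_mul_le_one_of_forall_le hsum hmin
  have hW : 0 < ∑ i, w i := sum_pos (fun i _ => Real.rpow_pos_of_pos (hu i) _) ⟨i₀, mem_univ _⟩
  have hanti : Antivary u w := fun i j hw => le_of_not_gt fun hu' =>
    hw.not_ge (Real.rpow_le_rpow_of_nonpos (hu i) hu'.le (by linarith))
  have hgap : 2 * d ^ 2 * (∑ i, (u i - m) ^ 2) * w i₀ ≤ -∑ i, (u i - m) * (w i - w i₀) := by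
    rw [mul_sum, sum_mul, ← sum_neg_distrib]
    refine sum_le_sum fun i _ => ?_
    have hspread : β * (u i - m) ≤ 2 * d := by
      have := sub_le_one_sub_card_mul hsum hmin i
      rw [le_div_iff₀ hβ0] at hnear
      nlinarith
    -- `2 d² m ≤ 2 d` and `2 d² β (uᵢ - m) ≤ 4 d³`: the origin of the bound `4 d³ + 2 d ≤ β`
    have hc : 2 * d ^ 2 * (m + β * (u i - m)) ≤ β := by nlinarith
    have := mul_sub_mul_rpow_neg_le_sub hβ1 (hu i₀) (hmin i) hc
    nlinarith [mul_le_mul_of_nonneg_right this (sub_nonneg.2 (hmin i))]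
  have hσ : ∑ i, (u i - 1 / d) ^ 2 ≤ ∑ i, (u i - m) ^ 2 := by
    rw [sum_sq_sub_eq hsum m]
    exact le_add_of_nonneg_right (by positivity)
  have hWw : ∑ i, w i ≤ d * w i₀ := by
    simpa using sum_le_sum fun i (_ : i ∈ univ) =>
      Real.rpow_le_rpow_of_nonpos (hu i₀) (hmin i) (by linarith : -β ≤ 0)
  have cheb := hanti.card_mul_sum_le_sum_mul_sum_add i₀
  rw [hsum, one_mul] at cheb
  rw [tiltedMean, div_le_iff₀ hW, ← mul_le_mul_iff_of_pos_left (by linarith : 0 < d)]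
  calc d * ∑ i, u i * w i ≤ ∑ i, w i - 2 * d ^ 2 * (∑ i, (u i - m) ^ 2) * w i₀ := by linarith
    _ ≤ ∑ i, w i - 2 * d * (∑ i, (u i - 1 / d) ^ 2) * ∑ i, w i := by
        have : 0 ≤ ∑ i, (u i - 1 / d) ^ 2 := by positivity
        nlinarith [mul_le_mul hσ hWw hW.le (by positivity : 0 ≤ ∑ i, (u i - m) ^ 2)]
    _ = d * ((1 / d - 2 * ∑ i, (u i - 1 / d) ^ 2) * ∑ i, w i) := by field_simp

theorem tiltedMean_add_tiltedMean_lt_of_far {β : ℝ} {u v : ι → ℝ} (hu : ∀ i, 0 < u i)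
    (hv : ∀ i, 0 < v i) (hsu : ∑ i, u i = 1) (hsv : ∑ i, v i = 1) {i₀ j₀ : ι}
    (hu_min : ∀ i, u i₀ ≤ u i) (hv_min : ∀ i, v j₀ ≤ v i)
    (hβ : 4 * (Fintype.card ι : ℝ) ^ 3 + 2 * Fintype.card ι ≤ β)
    (hfar : 2 * Fintype.card ι / β < 1 - Fintype.card ι * u i₀) :
    tiltedMean β u + tiltedMean β v < 2 * ∑ i, u i * v i := by
  set d : ℝ := (Fintype.card ι : ℝ)
  have hd : 1 ≤ d := Nat.one_le_cast.2 (Fintype.card_pos_iff.2 ⟨i₀⟩)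
  have hd3 := one_le_pow₀ (n := 3) hd
  have hβ1 : 1 ≤ β := by linarith
  have hRu := tiltedMean_le_mul hβ1 hu i₀
  have hRv := tiltedMean_le_mul hβ1 hv j₀
  have huv := min_add_mul_le_sum_mul hsu hsv hu_min hv_min
  have hvu := min_add_mul_le_sum_mul hsv hsu hv_min hu_min
  simp only [mul_comm (v _) (u _)] at hvu
  have := add_mul_lt_mul_one_sub_add_mul_one_sub (δ := d / β) (by linarith) (hu i₀).le (hv j₀)
    (card_mul_le_one_of_forall_le hsv hv_min) (by positivity)
    ((div_le_one (by linarith)).2 (by nlinarith))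
    (by rwa [mul_div_assoc'])
  linarith

theorem tiltedMean_add_tiltedMean_lt {β : ℝ}
    (hβ : 4 * (Fintype.card ι : ℝ) ^ 3 + 2 * Fintype.card ι ≤ β) {u v : ι → ℝ}
    (hu : ∀ i, 0 < u i) (hv : ∀ i, 0 < v i) (hsu : ∑ i, u i = 1) (hsv : ∑ i, v i = 1)
    (hne : (u ≠ fun _ => 1 / (Fintype.card ι : ℝ)) ∨ v ≠ fun _ => 1 / (Fintype.card ι : ℝ)) :
    tiltedMean β u + tiltedMean β v < 2 * ∑ i, u i * v i := by
  have := nonempty_of_sum_eq_one hsu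
  obtain ⟨i₀, hu_min⟩ := Finite.exists_min u
  obtain ⟨j₀, hv_min⟩ := Finite.exists_min v
  by_cases hu_far : 2 * Fintype.card ι / β < 1 - Fintype.card ι * u i₀
  · exact tiltedMean_add_tiltedMean_lt_of_far hu hv hsu hsv hu_min hv_min hβ hu_far
  by_cases hv_far : 2 * Fintype.card ι / β < 1 - Fintype.card ι * v j₀
  · rw [add_comm]
    simp only [mul_comm (u _) (v _)]
    exact tiltedMean_add_tiltedMean_lt_of_far hv hu hsv hsu hv_min hu_min hβ hv_far
  have hRu := tiltedMean_le_of_near hu hsu hu_min hβ (not_lt.1 hu_far)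
  have hRv := tiltedMean_le_of_near hv hsv hv_min hβ (not_lt.1 hv_far)
  have hinner := one_div_card_sub_le_sum_mul hsu hsv
  have hspread :
      0 < ∑ i, (u i - 1 / Fintype.card ι) ^ 2 + ∑ i, (v i - 1 / Fintype.card ι) ^ 2 := by
    rcases hne with h | h
    · exact add_pos_of_pos_of_nonneg (sum_sq_sub_pos_of_ne h) (by positivity)
    · exact add_pos_of_nonneg_of_pos (by positivity) (sum_sq_sub_pos_of_ne h)
  linarith

end

theorem stmt_10_general (d : ℕ) :
    ∃ A : ℝ, 0 < A ∧ ∀ α : ℝ, A < α →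
      ∀ u v : Fin d → ℝ, (∀ i, 0 < u i) → (∀ i, 0 < v i) →
        ∑ i, u i = 1 → ∑ i, v i = 1 →
        ((∑ i, u i ^ (-α)) / (∑ i, u i ^ (-(1 + α))) +
            (∑ i, v i ^ (-α)) / (∑ i, v i ^ (-(1 + α))) ≤ 2 * ∑ i, u i * v i ∧
          (2 * ∑ i, u i * v i =
              (∑ i, u i ^ (-α)) / (∑ i, u i ^ (-(1 + α))) +
                (∑ i, v i ^ (-α)) / (∑ i, v i ^ (-(1 + α))) ↔
            (u = fun _ => 1 / (d : ℝ)) ∧ (v = fun _ => 1 / (d : ℝ)))) := by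
  refine ⟨4 * d ^ 3 + 2 * d + 1, by positivity, fun α hα u v hu hv hsu hsv => ?_⟩
  have hβ : 4 * (Fintype.card (Fin d) : ℝ) ^ 3 + 2 * Fintype.card (Fin d) ≤ 1 + α := by
    rw [Fintype.card_fin]; linarith
  rw [div_sum_rpow_neg_eq_tiltedMean hu, div_sum_rpow_neg_eq_tiltedMean hv]
  by_cases huv : (u = fun _ => 1 / (d : ℝ)) ∧ v = fun _ => 1 / (d : ℝ)
  · obtain ⟨rfl, rfl⟩ := huv
    have := nonempty_of_sum_eq_one hsu
    have hd : (0 : ℝ) < d := by simpa using Fintype.card_pos (α := Fin d)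
    rw [tiltedMean_const _ (by positivity)]
    simp only [sum_const, card_univ, Fintype.card_fin, nsmul_eq_mul, iff_true, and_true]
    field_simp
    norm_num
  · have hlt := tiltedMean_add_tiltedMean_lt hβ hu hv hsu hsv
      (by simpa only [Fintype.card_fin] using not_and_or.1 huv)
    exact ⟨hlt.le, fun h => absurd h hlt.ne', fun h => absurd h huv⟩

/-- Proposition 1: for every `d ≥ 2` there is `α(d) > 0` such that for
`α > α(d)` and `u, v` in the open simplex,
`2 ∑ u_i v_i ≥ (∑ u_i^{−α})/(∑ u_i^{−(1+α)}) + (∑ v_i^{−α})/(∑ v_i^{−(1+α)})`,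
with equality iff `u = v = (1/d, …, 1/d)`. -/
theorem stmt_10 (d : ℕ) (hd : 2 ≤ d) :
    ∃ A : ℝ, 0 < A ∧ ∀ α : ℝ, A < α →
      ∀ u v : Fin d → ℝ, (∀ i, 0 < u i) → (∀ i, 0 < v i) →
        ∑ i, u i = 1 → ∑ i, v i = 1 →
        ((∑ i, u i ^ (-α)) / (∑ i, u i ^ (-(1 + α))) +
            (∑ i, v i ^ (-α)) / (∑ i, v i ^ (-(1 + α))) ≤ 2 * ∑ i, u i * v i ∧
          (2 * ∑ i, u i * v i =
              (∑ i, u i ^ (-α)) / (∑ i, u i ^ (-(1 + α))) +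
                (∑ i, v i ^ (-α)) / (∑ i, v i ^ (-(1 + α))) ↔
            (u = fun _ => 1 / (d : ℝ)) ∧ (v = fun _ => 1 / (d : ℝ)))) :=
  stmt_10_general d
end

section
/- Let d ≥ 2 be an integer and α > d − 2. Let M be the symmetric d×d real matrix with entries M_{ij} = (α+1)·1_{i=j} − (α+2)/d + 1_{i=d} + 1_{j=d} − d·1_{i=d}·1_{j=d}. Then M is positive semidefinite (i.e. xᵀ M x ≥ 0 for all x ∈ ℝ^d) and M annihilates the all-ones vector: M·(1,…,1)ᵀ = 0. -/
/-!
Subtracting the mean `m` of `x` turns the quadratic form of `M` into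
`(α + 1) ∑ i, (x i - m) ^ 2 - d (x_d - m) ^ 2`. The centred vector `y = x - m` sums to zero, so
`y_d = -∑_{i ≠ d} y i` and Cauchy–Schwarz gives `d y_d ^ 2 ≤ (d - 1) ∑ i, y i ^ 2`, which is at
most `(α + 1) ∑ i, y i ^ 2` because `α ≥ d - 2`.
-/

open Finset Matrix

variable {ι : Type*} [Fintype ι]

theorem sum_sub_mean (x : ι → ℝ) [Nonempty ι] :
    ∑ i, (x i - (∑ j, x j) / Fintype.card ι) = 0 := by
  have hn : (Fintype.card ι : ℝ) ≠ 0 := Nat.cast_ne_zero.2 Fintype.card_ne_zero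
  rw [sum_sub_distrib, sum_const, card_univ, nsmul_eq_mul, mul_div_cancel₀ _ hn, sub_self]

theorem sum_sub_mean_sq (x : ι → ℝ) [Nonempty ι] :
    ∑ i, (x i - (∑ j, x j) / Fintype.card ι) ^ 2 =
      ∑ i, x i ^ 2 - (∑ i, x i) ^ 2 / Fintype.card ι := by
  have hn : (Fintype.card ι : ℝ) ≠ 0 := Nat.cast_ne_zero.2 Fintype.card_ne_zero
  simp only [sub_sq, sum_add_distrib, sum_sub_distrib, ← sum_mul, ← mul_sum, sum_const, card_univ,
    nsmul_eq_mul]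
  field_simp
  ring

variable [DecidableEq ι]

noncomputable def hessianMatrix (α : ℝ) (L : ι) : Matrix ι ι ℝ :=
  Matrix.of fun i j => (α + 1) * (if i = j then 1 else 0) - (α + 2) / Fintype.card ι +
    (if i = L then 1 else 0) + (if j = L then 1 else 0) -
    Fintype.card ι * (if i = L then 1 else 0) * (if j = L then 1 else 0)

theorem hessianMatrix_mulVec_one (α : ℝ) (L : ι) : hessianMatrix α L *ᵥ (fun _ => 1) = 0 := by
  have : Nonempty ι := ⟨L⟩
  have hn : (Fintype.card ι : ℝ) ≠ 0 := Nat.cast_ne_zero.2 Fintype.card_ne_zero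
  ext i
  simp only [mulVec, dotProduct, hessianMatrix, mul_ite, mul_one, mul_zero, of_apply,
    sum_sub_distrib, sum_add_distrib, sum_ite_eq, sum_ite_eq', mem_univ, ↓reduceIte, sum_const,
    card_univ, nsmul_eq_mul, Pi.zero_apply]
  field_simp
  ring

theorem sum_sum_mul_hessianMatrix_mul (α : ℝ) (L : ι) (x : ι → ℝ) :
    ∑ i, ∑ j, x i * hessianMatrix α L i j * x j =
      (α + 1) * ∑ i, x i ^ 2 - (α + 2) / Fintype.card ι * (∑ i, x i) ^ 2 +
        2 * x L * ∑ i, x i - Fintype.card ι * x L ^ 2 := by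
  simp only [hessianMatrix, mul_ite, mul_one, mul_zero, of_apply, mul_sub, mul_add, sub_mul,
    add_mul, ite_mul, zero_mul, one_mul, sum_sub_distrib, sum_add_distrib, sum_ite_eq, sum_ite_eq',
    mem_univ, ↓reduceIte, ← mul_sum, ← sum_mul, sum_ite_irrel, sum_const_zero]
  simp only [mul_right_comm _ α, ← sum_mul, sq]
  ring

theorem card_mul_sq_le_of_sum_eq_zero {y : ι → ℝ} (hy : ∑ i, y i = 0) (L : ι) :
    Fintype.card ι * y L ^ 2 ≤ (Fintype.card ι - 1) * ∑ i, y i ^ 2 := by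
  have hcs := sq_sum_le_card_mul_sum_sq (s := univ.erase L) (f := y)
  rw [card_erase_of_mem (mem_univ L), card_univ, Nat.cast_pred (Fintype.card_pos_iff.2 ⟨L⟩)] at hcs
  have hrest : ∑ i ∈ univ.erase L, y i = -y L := by
    linarith [sum_erase_add univ y (mem_univ L)]
  rw [hrest, neg_sq] at hcs
  rw [← sum_erase_add univ (fun i => y i ^ 2) (mem_univ L)]
  nlinarith

theorem sum_sum_mul_hessianMatrix_mul_nonneg {α : ℝ} (hα : (Fintype.card ι : ℝ) - 2 ≤ α) (L : ι)
    (x : ι → ℝ) : 0 ≤ ∑ i, ∑ j, x i * hessianMatrix α L i j * x j := by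
  have : Nonempty ι := ⟨L⟩
  set y : ι → ℝ := fun i => x i - (∑ j, x j) / Fintype.card ι
  have hn : (Fintype.card ι : ℝ) ≠ 0 := Nat.cast_ne_zero.2 Fintype.card_ne_zero
  have hcentred : ∑ i, ∑ j, x i * hessianMatrix α L i j * x j =
      (α + 1) * ∑ i, y i ^ 2 - Fintype.card ι * y L ^ 2 := by
    rw [sum_sum_mul_hessianMatrix_mul, sum_sub_mean_sq]
    simp only [y]
    field_simp
    ring
  have hy := card_mul_sq_le_of_sum_eq_zero (sum_sub_mean x) L
  rw [hcentred]
  nlinarith [sum_nonneg fun i (_ : i ∈ univ) => sq_nonneg (y i)]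

theorem stmt_17_general (d : ℕ) (α : ℝ) (hα : (d : ℝ) - 2 < α)
    (M : Matrix (Fin d) (Fin d) ℝ)
    (hM : ∀ i j, M i j =
      (α + 1) * (if i = j then 1 else 0) - (α + 2) / d +
        (if i.val = d - 1 then 1 else 0) + (if j.val = d - 1 then 1 else 0) -
        d * (if i.val = d - 1 then 1 else 0) * (if j.val = d - 1 then 1 else 0)) :
    (∀ x : Fin d → ℝ, 0 ≤ ∑ i, ∑ j, x i * M i j * x j) ∧
      M.mulVec (fun _ => 1) = 0 := by
  rcases d with _ | n
  · exact ⟨fun x => by simp, funext fun i => i.elim0⟩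
  obtain rfl : M = hessianMatrix α (Fin.last n) := by
    ext i j
    simp [hM, hessianMatrix, Fin.ext_iff]
  exact ⟨sum_sum_mul_hessianMatrix_mul_nonneg (by simpa using hα.le) _,
    hessianMatrix_mulVec_one α _⟩

/-- the Hessian-type matrix
`M_{ij} = (α+1)·1_{i=j} − (α+2)/d + 1_{i=d} + 1_{j=d} − d·1_{i=d}·1_{j=d}`
is positive semidefinite and annihilates the all-ones vector, for `d ≥ 2`, `α > d − 2`. -/
theorem stmt_17 (d : ℕ) (hd : 2 ≤ d) (α : ℝ) (hα : (d : ℝ) - 2 < α)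
    (M : Matrix (Fin d) (Fin d) ℝ)
    (hM : ∀ i j, M i j =
      (α + 1) * (if i = j then 1 else 0) - (α + 2) / d +
        (if i.val = d - 1 then 1 else 0) + (if j.val = d - 1 then 1 else 0) -
        d * (if i.val = d - 1 then 1 else 0) * (if j.val = d - 1 then 1 else 0)) :
    (∀ x : Fin d → ℝ, 0 ≤ ∑ i, ∑ j, x i * M i j * x j) ∧
      M.mulVec (fun _ => 1) = 0 :=
  stmt_17_general d α hα M hM
end
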